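/- Suppose Assumption 1 holds and let X_1, X_2, … be i.i.d. with distribution F. Then there exist c' > 0 and a parameter θ^a with π_1 = 1, π_j = 0 for j ≥ 2, μ_1 = μ_1^0 and Σ_1 = c'Σ_1^0 such that, almost surely, L_β(θ^a, F_n) = (1/(nβ)) Σ_{i=1}^n φ_p(X_i, μ_1^0, c'Σ_1^0)^β − (1/(1+β)) ∫_{ℝ^p} φ_p(x, μ_1^0, c'Σ_1^0)^{1+β} dx ≥ 0 for all sufficiently large n; consequently, almost surely sup_{θ ∈ Θ_C} L_β(θ, F_n) ≥ 0 for all sufficiently large n. -/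

import Mathlib

open MeasureTheory Matrix Filter Topology Finset Real

noncomputable section

/-- The `p`-variate normal density `φ_p(x, μ, Σ)`. -/
def mvnpdf (p : ℕ) (x μ : Fin p → ℝ) (S : Matrix (Fin p) (Fin p) ℝ) : ℝ :=
  (2 * π) ^ (-(p : ℝ) / 2) * S.det ^ (-(1 : ℝ) / 2) *
    Real.exp (-(1 / 2) * ((x - μ) ⬝ᵥ (S⁻¹ *ᵥ (x - μ))))

/-- A (generalized) mixture parameter `θ = (π₁,…,π_k, μ₁,…,μ_k, Σ₁,…,Σ_k)`. -/
abbrev MixParam (p k : ℕ) :=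
  (Fin k → ℝ) × (Fin k → Fin p → ℝ) × (Fin k → Matrix (Fin p) (Fin p) ℝ)

/-- `D_j(x, θ) = π_j φ_p(x, μ_j, Σ_j)`. -/
def Dj (p k : ℕ) (θ : MixParam p k) (x : Fin p → ℝ) (j : Fin k) : ℝ :=
  θ.1 j * mvnpdf p x (θ.2.1 j) (θ.2.2 j)

/-- `D_j(x,θ) = D(x,θ) = max_i D_i(x,θ)`, i.e. the `j`-th component attains the maximum. -/
def IsArgMax (p k : ℕ) (θ : MixParam p k) (x : Fin p → ℝ) (j : Fin k) : Prop :=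
  ∀ i, Dj p k θ x i ≤ Dj p k θ x j

open Classical in
/-- The assignment function `Z_j(x,θ) = 1{D_j(x,θ) = D(x,θ)}`. -/
def Zj (p k : ℕ) (θ : MixParam p k) (x : Fin p → ℝ) (j : Fin k) : ℝ :=
  if IsArgMax p k θ x j then 1 else 0

/-- `∫_{ℝ^p} φ_p(x, μ, Σ)^{1+β} dx`. -/
def Jint (p : ℕ) (β : ℝ) (μ : Fin p → ℝ) (S : Matrix (Fin p) (Fin p) ℝ) : ℝ :=
  ∫ x : Fin p → ℝ, mvnpdf p x μ S ^ (1 + β)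

open Classical in
/-- The integrand `m_θ(x)` of the pseudo β-likelihood, with the convention that a summand
is `0` whenever `Z_j(x,θ) = 0`. -/
def mfun (p k : ℕ) (β : ℝ) (θ : MixParam p k) (x : Fin p → ℝ) : ℝ :=
  ∑ j : Fin k,
    if IsArgMax p k θ x j then
      Real.log (θ.1 j) + (1 / β) * mvnpdf p x (θ.2.1 j) (θ.2.2 j) ^ β
        - (1 / (1 + β)) * Jint p β (θ.2.1 j) (θ.2.2 j)
    else 0

/-- The pseudo β-likelihood `L_β(θ, P) = E_P[m_θ(X)]`. -/
def Lbeta (p k : ℕ) (β : ℝ) (θ : MixParam p k) (P : Measure (Fin p → ℝ)) : ℝ :=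
  ∫ x, mfun p k β θ x ∂P

/-- The empirical pseudo β-likelihood `L_β(θ, F_n)` based on observations `xs 0, …, xs (n-1)`. -/
def Lemp (p k : ℕ) (β : ℝ) (θ : MixParam p k) (n : ℕ) (xs : ℕ → Fin p → ℝ) : ℝ :=
  (1 / (n : ℝ)) * ∑ i ∈ Finset.range n, mfun p k β θ (xs i)

/-- `θ` is a genuine mixture parameter: weights in `[0,1]` summing to `1`, and symmetric
positive definite dispersion matrices. -/
def IsMixParam (p k : ℕ) (θ : MixParam p k) : Prop :=
  (∀ j, 0 ≤ θ.1 j ∧ θ.1 j ≤ 1) ∧ (∑ j, θ.1 j) = 1 ∧ ∀ j, (θ.2.2 j).PosDef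

/-- The constrained parameter space `Θ_C`: every eigenvalue of every `Σ_j` is at least `c₁`
(NS constraint) and the ratio of any two eigenvalues is at most `c` (ER constraint `M/m ≤ c`). -/
def InThetaC (p k : ℕ) (c c₁ : ℝ) (θ : MixParam p k) : Prop :=
  IsMixParam p k θ ∧
    (∀ j (h : (θ.2.2 j).IsHermitian) i, c₁ ≤ h.eigenvalues i) ∧
    (∀ j (h : (θ.2.2 j).IsHermitian) i j' (h' : (θ.2.2 j').IsHermitian) i',
      h.eigenvalues i ≤ c * h'.eigenvalues i')

/-- The `k`-component `p`-variate normal mixture measure `Σ_j w_j N_p(μ_j, Σ_j)`. -/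
def mixMeasure (p k : ℕ) (w : Fin k → ℝ) (μ : Fin k → Fin p → ℝ)
    (S : Fin k → Matrix (Fin p) (Fin p) ℝ) : Measure (Fin p → ℝ) :=
  volume.withDensity fun x => ENNReal.ofReal (∑ j, w j * mvnpdf p x (μ j) (S j))

/-- Assumption 1: `max_j π⁰_j ≥ (1+k⁰) β/(1+β)^{1+p/2}` for some `k⁰ > 0`. -/
def Assumption1 (p k : ℕ) (β : ℝ) (w0 : Fin k → ℝ) : Prop :=
  ∃ k0 > 0, ∃ j0 : Fin k, (∀ j, w0 j ≤ w0 j0) ∧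
    (1 + k0) * β / (1 + β) ^ (1 + (p : ℝ) / 2) ≤ w0 j0

/-- The Euclidean distance on the parameter space
`ℝ^k × (ℝ^p)^k × (ℝ^{p×p})^k`. -/
def paramDist (p k : ℕ) (θ θ' : MixParam p k) : ℝ :=
  Real.sqrt ((∑ j, (θ.1 j - θ'.1 j) ^ 2) + (∑ j, ∑ i, (θ.2.1 j i - θ'.2.1 j i) ^ 2)
    + (∑ j, ∑ i, ∑ i', (θ.2.2 j i i' - θ'.2.2 j i i') ^ 2))


variable {p : ℕ}

lemma quad_continuous (μ : Fin p → ℝ) (M : Matrix (Fin p) (Fin p) ℝ) :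
    Continuous fun x : Fin p → ℝ => (x - μ) ⬝ᵥ (M *ᵥ (x - μ)) := by
  simp only [dotProduct, mulVec]
  refine continuous_finset_sum _ fun i _ => Continuous.mul ?_ ?_
  · exact ((continuous_apply i).sub continuous_const)
  · exact continuous_finset_sum _ fun j _ => continuous_const.mul
      ((continuous_apply j).sub continuous_const)

lemma quad_continuous' (M : Matrix (Fin p) (Fin p) ℝ) :
    Continuous fun x : Fin p → ℝ => x ⬝ᵥ (M *ᵥ x) := by
  have := quad_continuous (0 : Fin p → ℝ) M
  simpa using this

lemma quad_nonneg {M : Matrix (Fin p) (Fin p) ℝ} (hM : M.PosSemidef) (v : Fin p → ℝ) :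
    0 ≤ v ⬝ᵥ (M *ᵥ v) := by
  simpa using hM.dotProduct_mulVec_nonneg v

lemma dot_mulVec_mulVec (B C : Matrix (Fin p) (Fin p) ℝ) (x : Fin p → ℝ) :
    (B *ᵥ x) ⬝ᵥ (C *ᵥ x) = x ⬝ᵥ ((Bᵀ * C) *ᵥ x) := by
  rw [← mulVec_mulVec, Matrix.dotProduct_mulVec x Bᵀ, Matrix.vecMul_transpose]

open scoped MatrixOrder in
lemma gauss_integral {A : Matrix (Fin p) (Fin p) ℝ} (hA : A.PosDef) :
    (∫ x : Fin p → ℝ, Real.exp (-(1/2) * (x ⬝ᵥ (A *ᵥ x)))) =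
      (2 * π) ^ ((p : ℝ)/2) * A.det ^ (-(1:ℝ)/2) := by
  classical
  set Q := CFC.sqrt A with hQ
  have hQQ : Q * Q = A := CFC.sqrt_mul_sqrt_self A hA.posSemidef.nonneg
  have hQps : Q.PosSemidef := (CFC.sqrt_nonneg A).posSemidef
  have hdetA : 0 < A.det := hA.det_pos
  have hQdet2 : Q.det * Q.det = A.det := by rw [← det_mul, hQQ]
  have hQdetnn : 0 ≤ Q.det := by
    rw [hQps.1.det_eq_prod_eigenvalues]
    exact Finset.prod_nonneg fun i _ => hQps.eigenvalues_nonneg i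
  have hQdetpos : 0 < Q.det := by
    rcases lt_or_eq_of_le hQdetnn with h | h
    · exact h
    · exfalso; rw [← h] at hQdet2; simp at hQdet2; nlinarith
  set B := Q⁻¹ with hB
  have hdetB : B.det = (Q.det)⁻¹ := by
    rw [hB, det_nonsing_inv, Ring.inverse_eq_inv']
  have hdetBne : B.det ≠ 0 := by rw [hdetB]; positivity
  have hBAB : Bᵀ * (A * B) = 1 := by
    have hBher : Bᵀ = B := by
      have h1 : B.IsHermitian := hQps.1.inv
      have := h1
      rw [Matrix.IsHermitian, conjTranspose_eq_transpose_of_trivial] at this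
      exact this
    rw [hBher, hB, ← hQQ, Matrix.mul_assoc, Matrix.mul_nonsing_inv _ (Ne.isUnit hQdetpos.ne'),
      Matrix.mul_one, Matrix.nonsing_inv_mul _ (Ne.isUnit hQdetpos.ne')]
  have hmap := Real.map_matrix_volume_pi_eq_smul_volume_pi hdetBne
  set f : (Fin p → ℝ) → ℝ := fun x => Real.exp (-(1/2) * (x ⬝ᵥ (A *ᵥ x))) with hf
  have hfc : Continuous f := Real.continuous_exp.comp ((continuous_const.mul (quad_continuous' A)))
  have hmeasB : Measurable (Matrix.toLin' B) := (LinearMap.continuous_on_pi _).measurable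
  have key : (∫ x : Fin p → ℝ, f (Matrix.toLin' B x)) = |B.det|⁻¹ * ∫ x, f x := by
    rw [← integral_map hmeasB.aemeasurable hfc.aestronglyMeasurable, hmap,
      integral_smul_measure]
    rw [ENNReal.toReal_ofReal (by positivity), smul_eq_mul, abs_inv]
  have lhs_eq : (∫ x : Fin p → ℝ, f (Matrix.toLin' B x)) = Real.sqrt (2 * π) ^ p := by
    have : ∀ x : Fin p → ℝ, f (Matrix.toLin' B x) = ∏ i, Real.exp (-(1/2) * (x i)^2) := by
      intro x
      rw [hf]
      simp only [Matrix.toLin'_apply]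
      rw [mulVec_mulVec, dot_mulVec_mulVec, hBAB, one_mulVec]
      rw [← Real.exp_sum]
      congr 1
      rw [dotProduct, Finset.mul_sum]
      exact Finset.sum_congr rfl fun i _ => by ring
    simp_rw [this]
    rw [MeasureTheory.integral_fintype_prod_volume_eq_pow (ι := Fin p) (fun t => Real.exp (-(1/2) * t^2))]
    congr 1
    · have : ∀ t : ℝ, -(1/2 : ℝ) * t^2 = -(1/2 * t^2) := fun t => by ring
      simp_rw [this]
      have := integral_gaussian (1/2 : ℝ)
      simp_rw [neg_mul] at this ⊢
      rw [this]
      rw [div_div_eq_mul_div, mul_comm π 2]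
      norm_num
    · simp [Fintype.card_fin]
  have hQdet_eq : Q.det = Real.sqrt A.det := by
    rw [← hQdet2, Real.sqrt_mul_self hQdetnn]
  have : ∫ x, f x = |B.det| * Real.sqrt (2*π) ^ p := by
    rw [← lhs_eq, key, ← mul_assoc]
    rw [mul_inv_cancel₀ (by positivity : |B.det| ≠ 0), one_mul]
  have h2pi : (0:ℝ) ≤ 2 * π := by positivity
  have h1 : Real.sqrt (2*π) ^ p = (2*π) ^ ((p:ℝ)/2) := by
    rw [Real.sqrt_eq_rpow, ← Real.rpow_natCast ((2*π) ^ ((1:ℝ)/2)) p, ← Real.rpow_mul h2pi]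
    congr 1
    ring
  have h2 : (Real.sqrt A.det)⁻¹ = A.det ^ (-(1:ℝ)/2) := by
    rw [Real.sqrt_eq_rpow, ← Real.rpow_neg_one (A.det ^ ((1:ℝ)/2)), ← Real.rpow_mul hdetA.le]
    norm_num
  rw [this, hdetB, abs_of_pos (by positivity : (0:ℝ) < (Q.det)⁻¹), hQdet_eq, h1, h2]
  ring

lemma mvnpdf_pos {S : Matrix (Fin p) (Fin p) ℝ} (hS : S.PosDef) (x μ : Fin p → ℝ) :
    0 < mvnpdf p x μ S := by
  unfold mvnpdf
  have h1 : (0:ℝ) < 2 * π := by positivity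
  have h2 := hS.det_pos
  positivity

lemma mvnpdf_rpow {S : Matrix (Fin p) (Fin p) ℝ} (hS : S.PosDef) (x μ : Fin p → ℝ) (t : ℝ) :
    mvnpdf p x μ S ^ t = ((2*π) ^ (-(p:ℝ)/2) * S.det ^ (-(1:ℝ)/2)) ^ t *
      Real.exp (-(t/2) * ((x - μ) ⬝ᵥ (S⁻¹ *ᵥ (x - μ)))) := by
  unfold mvnpdf
  have h1 : (0:ℝ) < 2 * π := by positivity
  have h2 := hS.det_pos
  rw [Real.mul_rpow (by positivity) (Real.exp_pos _).le,
    Real.rpow_def_of_pos (Real.exp_pos _), Real.log_exp]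
  congr 1
  ring

lemma posDef_smul {S : Matrix (Fin p) (Fin p) ℝ} (hS : S.PosDef) {c : ℝ} (hc : 0 < c) :
    (c • S).PosDef := by
  constructor
  · rw [Matrix.IsHermitian, conjTranspose_smul, star_trivial, hS.1]
  · exact (hS.smul hc).2

lemma smul_matrix_inv {S : Matrix (Fin p) (Fin p) ℝ} (hS : S.PosDef) {c : ℝ} (hc : 0 < c) :
    (c • S)⁻¹ = c⁻¹ • S⁻¹ := by
  apply Matrix.inv_eq_right_inv
  rw [Matrix.smul_mul, Matrix.mul_smul, smul_smul, mul_inv_cancel₀ hc.ne',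
    Matrix.mul_nonsing_inv _ (Ne.isUnit hS.det_pos.ne'), one_smul]

lemma Jint_eq {β : ℝ} (hβ : 0 < β) {S : Matrix (Fin p) (Fin p) ℝ} (hS : S.PosDef)
    (μv : Fin p → ℝ) :
    Jint p β μv S = ((2*π) ^ (-(p:ℝ)/2) * S.det ^ (-(1:ℝ)/2)) ^ β * (1+β) ^ (-(p:ℝ)/2) := by
  set C := (2*π) ^ (-(p:ℝ)/2) * S.det ^ (-(1:ℝ)/2) with hC
  have h2pi : (0:ℝ) < 2 * π := by positivity
  have hdet := hS.det_pos
  have hCpos : 0 < C := by rw [hC]; positivity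
  have hb1 : (0:ℝ) < 1 + β := by linarith
  set A := (1+β) • S⁻¹ with hA
  have hApd : A.PosDef := posDef_smul hS.inv hb1
  unfold Jint
  have h1 : ∀ x, mvnpdf p x μv S ^ (1+β) =
      C ^ (1+β) * Real.exp (-(1/2) * ((x - μv) ⬝ᵥ (A *ᵥ (x - μv)))) := by
    intro x
    rw [mvnpdf_rpow hS, ← hC]
    congr 2
    rw [hA, smul_mulVec, dotProduct_smul, smul_eq_mul]
    ring
  simp_rw [h1]
  rw [MeasureTheory.integral_const_mul]
  have h2 : (∫ x : Fin p → ℝ, Real.exp (-(1/2) * ((x - μv) ⬝ᵥ (A *ᵥ (x - μv))))) =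
      ∫ x : Fin p → ℝ, Real.exp (-(1/2) * (x ⬝ᵥ (A *ᵥ x))) :=
    integral_sub_right_eq_self (fun y => Real.exp (-(1/2) * (y ⬝ᵥ (A *ᵥ y)))) μv
  rw [h2, gauss_integral hApd]
  have hdetA : A.det = (1+β) ^ ((p:ℝ)) * S.det ^ (-(1:ℝ)) := by
    rw [hA, det_smul, det_nonsing_inv, Ring.inverse_eq_inv', Real.rpow_natCast,
      Real.rpow_neg_one]
    simp [Fintype.card_fin]
  have e1 : A.det ^ (-(1:ℝ)/2) = (1+β) ^ (-(p:ℝ)/2) * S.det ^ ((1:ℝ)/2) := by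
    rw [hdetA, Real.mul_rpow (by positivity) (by positivity), ← Real.rpow_mul hb1.le,
      ← Real.rpow_mul hdet.le]
    congr 1
    · congr 1; ring
    · congr 1; ring
  have e2 : C ^ ((1:ℝ)+β) = C * C ^ β := by
    rw [Real.rpow_add hCpos, Real.rpow_one]
  have key : C * ((2*π) ^ ((p:ℝ)/2) * S.det ^ ((1:ℝ)/2)) = 1 := by
    rw [hC, mul_mul_mul_comm, ← Real.rpow_add h2pi, ← Real.rpow_add hdet]
    simp [neg_div]
  calc C ^ ((1:ℝ)+β) * ((2*π) ^ ((p:ℝ)/2) * A.det ^ (-(1:ℝ)/2))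
      = (C ^ β * (1+β) ^ (-(p:ℝ)/2)) * (C * ((2*π) ^ ((p:ℝ)/2) * S.det ^ ((1:ℝ)/2))) := by
        rw [e1, e2]; ring
    _ = C ^ β * (1+β) ^ (-(p:ℝ)/2) := by rw [key, mul_one]

lemma eigenvalues_smul_one {a : ℝ}
    (h : ((a • (1 : Matrix (Fin p) (Fin p) ℝ))).IsHermitian) (i : Fin p) :
    h.eigenvalues i = a := by
  have hv := h.mulVec_eigenvectorBasis i
  rw [smul_mulVec, one_mulVec] at hv
  have hvne : ⇑(h.eigenvectorBasis i) ≠ 0 := by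
    have hne := h.eigenvectorBasis.orthonormal.ne_zero i
    intro hcontra
    apply hne
    ext j
    exact congrFun hcontra j
  have hz : (a - h.eigenvalues i) • ⇑(h.eigenvectorBasis i) = 0 := by
    rw [sub_smul, hv, sub_self]
  rcases smul_eq_zero.1 hz with h1 | h1
  · linarith [sub_eq_zero.1 (by linarith [h1] : a - h.eigenvalues i = 0)]
  · exact absurd h1 hvne

lemma mfun_point {k : ℕ} {β : ℝ} (hβ : 0 < β) (j₀ : Fin k) (θ : MixParam p k)
    (hw1 : θ.1 j₀ = 1) (hw0 : ∀ j, j ≠ j₀ → θ.1 j = 0) (hpd : (θ.2.2 j₀).PosDef)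
    (x : Fin p → ℝ) :
    mfun p k β θ x = (1/β) * mvnpdf p x (θ.2.1 j₀) (θ.2.2 j₀) ^ β
      - (1/(1+β)) * Jint p β (θ.2.1 j₀) (θ.2.2 j₀) := by
  classical
  have hpos : 0 < Dj p k θ x j₀ := by
    unfold Dj; rw [hw1, one_mul]; exact mvnpdf_pos hpd _ _
  have hmax : IsArgMax p k θ x j₀ := by
    intro i
    by_cases hij : i = j₀
    · subst hij; exact le_rfl
    · have : Dj p k θ x i = 0 := by unfold Dj; rw [hw0 i hij, zero_mul]
      rw [this]; exact hpos.le
  have hnot : ∀ j, j ≠ j₀ → ¬ IsArgMax p k θ x j := by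
    intro j hj hmaxj
    have h1 := hmaxj j₀
    have hDj : Dj p k θ x j = 0 := by unfold Dj; rw [hw0 j hj, zero_mul]
    rw [hDj] at h1; linarith
  unfold mfun
  rw [Finset.sum_eq_single j₀]
  · rw [if_pos hmax, hw1, Real.log_one]; ring
  · intro j _ hj; rw [if_neg (hnot j hj)]
  · intro hmem; exact absurd (Finset.mem_univ j₀) hmem

lemma mvnpdf_rpow_continuous {S : Matrix (Fin p) (Fin p) ℝ} (hS : S.PosDef)
    (μv : Fin p → ℝ) (t : ℝ) :
    Continuous fun x => mvnpdf p x μv S ^ t := by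
  have : (fun x => mvnpdf p x μv S ^ t) =
      fun x => ((2*π) ^ (-(p:ℝ)/2) * S.det ^ (-(1:ℝ)/2)) ^ t *
        Real.exp (-(t/2) * ((x - μv) ⬝ᵥ (S⁻¹ *ᵥ (x - μv)))) :=
    funext fun x => mvnpdf_rpow hS x μv t
  rw [this]
  exact continuous_const.mul
    (Real.continuous_exp.comp (continuous_const.mul (quad_continuous μv S⁻¹)))

lemma mvnpdf_rpow_nonneg {S : Matrix (Fin p) (Fin p) ℝ} (hS : S.PosDef)
    (x μv : Fin p → ℝ) (t : ℝ) :
    0 ≤ mvnpdf p x μv S ^ t :=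
  Real.rpow_nonneg (mvnpdf_pos hS x μv).le t

lemma slln_event {Ω : Type} [MeasurableSpace Ω] (P : Measure Ω) [IsProbabilityMeasure P]
    (X : ℕ → Ω → Fin p → ℝ) (hXmeas : ∀ i, Measurable (X i))
    (hiid : ProbabilityTheory.iIndepFun X P)
    (hdisteq : ∀ i, Measure.map (X i) P = Measure.map (X 0) P)
    {β : ℝ} (hβ : 0 < β) (μv : Fin p → ℝ) {S : Matrix (Fin p) (Fin p) ℝ} (hS : S.PosDef)
    (τ : ℝ) (hE : τ < ∫ x, mvnpdf p x μv S ^ β ∂(Measure.map (X 0) P)) :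
    ∀ᵐ ω ∂P, ∃ N : ℕ, ∀ n ≥ N,
      τ ≤ (1 / (n:ℝ)) * ∑ i ∈ Finset.range n, mvnpdf p (X i ω) μv S ^ β := by
  set C := (2*π) ^ (-(p:ℝ)/2) * S.det ^ (-(1:ℝ)/2) with hC
  have h2pi : (0:ℝ) < 2 * π := by positivity
  have hdet := hS.det_pos
  have hCpos : 0 < C := by rw [hC]; positivity
  set g : (Fin p → ℝ) → ℝ := fun x => mvnpdf p x μv S ^ β with hg
  have hgform : ∀ x, g x = C ^ β * Real.exp (-(β/2) * ((x - μv) ⬝ᵥ (S⁻¹ *ᵥ (x - μv)))) :=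
    fun x => mvnpdf_rpow hS x μv β
  have hgc : Continuous g := mvnpdf_rpow_continuous hS μv β
  have hgnn : ∀ x, 0 ≤ g x := by
    intro x; rw [hgform]; positivity
  have hgub : ∀ x, g x ≤ C ^ β := by
    intro x
    rw [hgform]
    have h1 : Real.exp (-(β/2) * ((x - μv) ⬝ᵥ (S⁻¹ *ᵥ (x - μv)))) ≤ 1 := by
      rw [Real.exp_le_one_iff]
      have := quad_nonneg hS.inv.posSemidef (x - μv)
      nlinarith
    nlinarith [Real.rpow_pos_of_pos hCpos β]
  set Y : ℕ → Ω → ℝ := fun i ω => g (X i ω) with hY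
  have hYmeas : ∀ i, Measurable (Y i) := fun i => hgc.measurable.comp (hXmeas i)
  have hint : Integrable (Y 0) P := by
    refine (integrable_const (C ^ β)).mono' (hYmeas 0).aestronglyMeasurable
      (ae_of_all _ fun ω => ?_)
    rw [Real.norm_eq_abs, abs_of_nonneg (hgnn _)]
    exact hgub _
  have hindep : Pairwise (Function.onFun (fun f g => ProbabilityTheory.IndepFun f g P) Y) := fun i j hij =>
    (hiid.indepFun hij).comp hgc.measurable hgc.measurable
  have hident : ∀ i, ProbabilityTheory.IdentDistrib (Y i) (Y 0) P P := fun i =>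
    ProbabilityTheory.IdentDistrib.comp
      ⟨(hXmeas i).aemeasurable, (hXmeas 0).aemeasurable, hdisteq i⟩ hgc.measurable
  have hsl := ProbabilityTheory.strong_law_ae_real Y hint hindep hident
  have hmean : (∫ ω, Y 0 ω ∂P) = ∫ x, g x ∂(Measure.map (X 0) P) :=
    (integral_map (hXmeas 0).aemeasurable hgc.aestronglyMeasurable).symm
  filter_upwards [hsl] with ω hω
  rw [hmean] at hω
  have hev : ∀ᶠ n : ℕ in atTop, τ < (∑ i ∈ Finset.range n, Y i ω) / n :=
    hω.eventually_const_lt hE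
  obtain ⟨N, hN⟩ := eventually_atTop.1 hev
  refine ⟨N, fun n hn => ?_⟩
  have := (hN n hn).le
  rw [div_eq_inv_mul, ← one_div] at this
  exact this

lemma exists_scale {β : ℝ} (hβ : 0 < β) (μv : Fin p → ℝ)
    {S₀ : Matrix (Fin p) (Fin p) ℝ} (hS₀ : S₀.PosDef)
    (F : Measure (Fin p → ℝ)) [IsProbabilityMeasure F] (c₀ : ℝ) :
    ∃ c' : ℝ, c₀ ≤ c' ∧ 0 < c' ∧
      (β/(1+β)) * Jint p β μv (c' • S₀) < ∫ x, mvnpdf p x μv (c' • S₀) ^ β ∂F := by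
  have hb1 : (0:ℝ) < 1 + β := by linarith
  set τ := β/(1+β) * (1+β) ^ (-(p:ℝ)/2) with hτ
  have hτpos : 0 < τ := by
    have : (0:ℝ) < (1+β) ^ (-(p:ℝ)/2) := Real.rpow_pos_of_pos hb1 _
    positivity
  have hτlt : τ < 1 := by
    have h1 : β/(1+β) < 1 := by rw [div_lt_one hb1]; linarith
    have h2 : (1+β) ^ (-(p:ℝ)/2) ≤ 1 := by
      apply Real.rpow_le_one_of_one_le_of_nonpos (by linarith)
      rw [neg_div]
      exact neg_nonpos.mpr (by positivity)
    nlinarith [hτpos, div_pos hβ hb1]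
  set ρ := (1+τ)/2 with hρ
  have hρτ : τ < ρ := by rw [hρ]; linarith
  have hρ1 : ρ < 1 := by rw [hρ]; linarith
  have hρpos : 0 < ρ := by rw [hρ]; linarith
  set q : (Fin p → ℝ) → ℝ := fun x => (x - μv) ⬝ᵥ (S₀⁻¹ *ᵥ (x - μv)) with hq
  have hqc : Continuous q := quad_continuous μv S₀⁻¹
  have hqnn : ∀ x, 0 ≤ q x := fun x => quad_nonneg hS₀.inv.posSemidef _
  set B : ℕ → Set (Fin p → ℝ) := fun n => {x | q x ≤ n} with hB
  have hBmeas : ∀ n, MeasurableSet (B n) :=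
    fun n => measurableSet_le hqc.measurable measurable_const
  have hBmono : Monotone B := by
    intro m n hmn x hx
    simp only [hB, Set.mem_setOf_eq] at hx ⊢
    exact le_trans hx (by exact_mod_cast hmn)
  have hBunion : (⋃ n, B n) = Set.univ := by
    apply Set.eq_univ_of_forall
    intro x
    apply Set.mem_iUnion.2
    refine ⟨⌈q x⌉₊, ?_⟩
    simp only [hB, Set.mem_setOf_eq]
    exact Nat.le_ceil _
  have hms := tendsto_measure_iUnion_atTop (μ := F) hBmono
  rw [hBunion, measure_univ] at hms
  have htoReal : Tendsto (fun n => (F (B n)).toReal) atTop (𝓝 1) := by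
    have := (ENNReal.tendsto_toReal ENNReal.one_ne_top).comp hms
    exact this
  obtain ⟨n₀, hn₀⟩ := (htoReal.eventually (eventually_gt_nhds hρ1)).exists
  set L := Real.log (ρ/τ) with hL
  have hLpos : 0 < L := Real.log_pos (by rw [lt_div_iff₀ hτpos]; linarith)
  set c' := max c₀ (β * n₀ / (2*L) + 1) with hc'
  have hc'pos : 0 < c' := lt_of_lt_of_le (by positivity) (le_max_right _ _)
  have hc'c₀ : c₀ ≤ c' := le_max_left _ _
  have hexp : τ / ρ < Real.exp (-(β * n₀) / (2 * c')) := by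
    have h2 : β * n₀ / (2*L) + 1 ≤ c' := le_max_right _ _
    have h3 : β * n₀ / (2*L) < c' := by
      have : (0:ℝ) ≤ β * n₀ / (2*L) := by positivity
      linarith
    have h1 : β * n₀ / (2 * c') < L := by
      rw [div_lt_iff₀ (by positivity)]
      calc β * n₀ = (β * n₀/(2*L)) * (2*L) := by field_simp
        _ < c' * (2*L) := by
            exact mul_lt_mul_of_pos_right h3 (by positivity)
        _ = L * (2*c') := by ring
    have heq : τ/ρ = Real.exp (-L) := by
      rw [Real.exp_neg, hL, Real.exp_log (by positivity)]
      rw [inv_div]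
    rw [heq]
    apply Real.exp_lt_exp.2
    rw [neg_div]
    linarith
  set S := c' • S₀ with hS
  have hSpd : S.PosDef := posDef_smul hS₀ hc'pos
  set C := (2*π) ^ (-(p:ℝ)/2) * S.det ^ (-(1:ℝ)/2) with hCdef
  have h2pi : (0:ℝ) < 2 * π := by positivity
  have hCpos : 0 < C := by
    have := hSpd.det_pos
    rw [hCdef]; positivity
  have hCb : 0 < C ^ β := Real.rpow_pos_of_pos hCpos β
  have hgform : ∀ x, mvnpdf p x μv S ^ β = C ^ β * Real.exp (-(β/2) * (c'⁻¹ * q x)) := by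
    intro x
    rw [mvnpdf_rpow hSpd, ← hCdef]
    congr 2
    rw [hS, smul_matrix_inv hS₀ hc'pos, smul_mulVec, dotProduct_smul, smul_eq_mul, hq]
  have hglb : ∀ x ∈ B n₀, C ^ β * Real.exp (-(β * n₀) / (2 * c')) ≤ mvnpdf p x μv S ^ β := by
    intro x hx
    rw [hgform]
    apply mul_le_mul_of_nonneg_left _ hCb.le
    apply Real.exp_le_exp.2
    have hxq : q x ≤ n₀ := hx
    have h4 : c'⁻¹ * q x ≤ c'⁻¹ * n₀ :=
      mul_le_mul_of_nonneg_left hxq (by positivity)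
    have h5 : -(β/2) * (c'⁻¹ * n₀) ≤ -(β/2) * (c'⁻¹ * q x) := by nlinarith
    calc -(β * n₀) / (2 * c') = -(β/2) * (c'⁻¹ * n₀) := by field_simp
      _ ≤ -(β/2) * (c'⁻¹ * q x) := h5
  have hgc : Continuous fun x => mvnpdf p x μv S ^ β := mvnpdf_rpow_continuous hSpd μv β
  have hgnn : ∀ x, (0:ℝ) ≤ mvnpdf p x μv S ^ β := fun x => mvnpdf_rpow_nonneg hSpd x μv β
  have hgub : ∀ x, mvnpdf p x μv S ^ β ≤ C ^ β := by
    intro x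
    rw [hgform]
    have h1 : Real.exp (-(β/2) * (c'⁻¹ * q x)) ≤ 1 := by
      rw [Real.exp_le_one_iff]
      have h2 : (0:ℝ) ≤ c'⁻¹ := by positivity
      rw [neg_mul]
      exact neg_nonpos.mpr (mul_nonneg (by positivity) (mul_nonneg h2 (hqnn x)))
    nlinarith
  have hint : Integrable (fun x => mvnpdf p x μv S ^ β) F := by
    refine (integrable_const (C ^ β)).mono' hgc.aestronglyMeasurable (ae_of_all _ fun x => ?_)
    rw [Real.norm_eq_abs, abs_of_nonneg (hgnn x)]
    exact hgub x
  have h5 : C ^ β * Real.exp (-(β * n₀) / (2 * c')) * (F (B n₀)).toReal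
      ≤ ∫ x in B n₀, mvnpdf p x μv S ^ β ∂F :=
    setIntegral_ge_of_const_le_real (hBmeas n₀) (measure_ne_top F _) hglb hint.integrableOn
  have h6 : (∫ x in B n₀, mvnpdf p x μv S ^ β ∂F) ≤ ∫ x, mvnpdf p x μv S ^ β ∂F :=
    setIntegral_le_integral hint (ae_of_all _ hgnn)
  have h7 : (β/(1+β)) * Jint p β μv S = C ^ β * τ := by
    rw [Jint_eq hβ hSpd, ← hCdef, hτ]; ring
  have h8 : τ < Real.exp (-(β * n₀) / (2 * c')) * (F (B n₀)).toReal := by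
    calc τ = (τ/ρ) * ρ := by field_simp
      _ < Real.exp (-(β * n₀) / (2 * c')) * ρ := mul_lt_mul_of_pos_right hexp hρpos
      _ ≤ Real.exp (-(β * n₀) / (2 * c')) * (F (B n₀)).toReal :=
          mul_le_mul_of_nonneg_left hn₀.le (Real.exp_pos _).le
  refine ⟨c', hc'c₀, hc'pos, ?_⟩
  rw [← hS, h7]
  calc C ^ β * τ < C ^ β * (Real.exp (-(β * n₀) / (2 * c')) * (F (B n₀)).toReal) :=
        mul_lt_mul_of_pos_left h8 hCb
    _ = C ^ β * Real.exp (-(β * n₀) / (2 * c')) * (F (B n₀)).toReal := by ring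
    _ ≤ ∫ x in B n₀, mvnpdf p x μv S ^ β ∂F := h5
    _ ≤ ∫ x, mvnpdf p x μv S ^ β ∂F := h6

lemma Lemp_eq {k : ℕ} {β : ℝ} (hβ : 0 < β) (j₀ : Fin k) (θ : MixParam p k)
    (hw1 : θ.1 j₀ = 1) (hw0 : ∀ j, j ≠ j₀ → θ.1 j = 0) (hpd : (θ.2.2 j₀).PosDef)
    (n : ℕ) (hn : 1 ≤ n) (xs : ℕ → Fin p → ℝ) :
    Lemp p k β θ n xs = (1/β) * ((1/(n:ℝ)) *
        ∑ i ∈ Finset.range n, mvnpdf p (xs i) (θ.2.1 j₀) (θ.2.2 j₀) ^ β)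
      - (1/(1+β)) * Jint p β (θ.2.1 j₀) (θ.2.2 j₀) := by
  have hnne : (n:ℝ) ≠ 0 := Nat.cast_ne_zero.2 (by omega)
  unfold Lemp
  rw [Finset.sum_congr rfl (fun i _ => mfun_point hβ j₀ θ hw1 hw0 hpd (xs i))]
  rw [Finset.sum_sub_distrib, Finset.sum_const, Finset.card_range, ← Finset.mul_sum,
    nsmul_eq_mul]
  field_simp

end

/-- almost surely, for all sufficiently large `n`, the empirical pseudo
β-likelihood at `θ^a` equals the displayed average and is nonnegative; consequently
`sup_{θ ∈ Θ_C} L_β(θ, F_n) ≥ 0` for all sufficiently large `n`, almost surely. -/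
theorem empirical_sup_eventually_nonneg
    (p k : ℕ) (hp : 0 < p) (hk : 0 < k) (β : ℝ) (hβ : 0 < β)
    (c c₁ : ℝ) (hc : 1 ≤ c) (hc₁ : 0 < c₁)
    (w0 : Fin k → ℝ) (mu0 : Fin k → Fin p → ℝ) (S0 : Fin k → Matrix (Fin p) (Fin p) ℝ)
    (hw0 : ∀ j, 0 ≤ w0 j ∧ w0 j ≤ 1) (hw0sum : (∑ j, w0 j) = 1)
    (hS0 : ∀ j, (S0 j).PosDef)
    -- index 1 is chosen so that `π₁⁰ = max_j π_j⁰`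
    (hmaxw : ∀ j, w0 j ≤ w0 ⟨0, hk⟩)
    (hA1 : Assumption1 p k β w0)
    {Ω : Type} [MeasurableSpace Ω] (P : Measure Ω) [IsProbabilityMeasure P]
    (X : ℕ → Ω → Fin p → ℝ) (hXmeas : ∀ i, Measurable (X i))
    (hiid : ProbabilityTheory.iIndepFun X P)
    (hdist : ∀ i, Measure.map (X i) P = mixMeasure p k w0 mu0 S0) :
    ∃ c' > (0 : ℝ), ∃ θa : MixParam p k,
      θa.1 ⟨0, hk⟩ = 1 ∧ (∀ j, j ≠ ⟨0, hk⟩ → θa.1 j = 0) ∧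
      θa.2.1 ⟨0, hk⟩ = mu0 ⟨0, hk⟩ ∧ θa.2.2 ⟨0, hk⟩ = c' • S0 ⟨0, hk⟩ ∧
      (∀ j, (θa.2.2 j).PosDef) ∧
      ∀ᵐ ω ∂P, ∃ N : ℕ, ∀ n ≥ N,
        (Lemp p k β θa n (fun i => X i ω) =
          (1 / ((n : ℝ) * β)) *
              (∑ i ∈ Finset.range n,
                mvnpdf p (X i ω) (mu0 ⟨0, hk⟩) (c' • S0 ⟨0, hk⟩) ^ β)
            - (1 / (1 + β)) * Jint p β (mu0 ⟨0, hk⟩) (c' • S0 ⟨0, hk⟩)) ∧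
        0 ≤ Lemp p k β θa n (fun i => X i ω) ∧
        (∀ b : ℝ, (∀ θ : MixParam p k, InThetaC p k c c₁ θ →
            Lemp p k β θ n (fun i => X i ω) ≤ b) → 0 ≤ b) := by
  
  classical
  set j₀ : Fin k := ⟨0, hk⟩ with hj₀
  have hdisteq : ∀ i, Measure.map (X i) P = Measure.map (X 0) P := fun i => by
    rw [hdist i, hdist 0]
  haveI hFprob : IsProbabilityMeasure (Measure.map (X 0) P) :=
    Measure.isProbabilityMeasure_map (hXmeas 0).aemeasurable
  obtain ⟨c', hc'1, hc'pos, hE1⟩ :=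
    exists_scale hβ (mu0 j₀) (hS0 j₀) (Measure.map (X 0) P) 1
  obtain ⟨c'', hc''max, hc''pos, hE2⟩ :=
    exists_scale (S₀ := (1 : Matrix (Fin p) (Fin p) ℝ)) hβ (mu0 j₀) Matrix.PosDef.one
      (Measure.map (X 0) P) (max c₁ 1)
  set wf : Fin k → ℝ := fun j => if j = j₀ then 1 else 0 with hwf
  have hwf1 : wf j₀ = 1 := by simp [hwf]
  have hwf0 : ∀ j, j ≠ j₀ → wf j = 0 := fun j hj => by simp [hwf, hj]
  set Sa := c' • S0 j₀ with hSa
  have hSapd : Sa.PosDef := posDef_smul (hS0 j₀) hc'pos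
  set Sb := c'' • (1 : Matrix (Fin p) (Fin p) ℝ) with hSb
  have hSbpd : Sb.PosDef := posDef_smul Matrix.PosDef.one hc''pos
  set θa : MixParam p k := (wf, fun _ => mu0 j₀, fun _ => Sa) with hθa
  set θb : MixParam p k := (wf, fun _ => mu0 j₀, fun _ => Sb) with hθb
  have hevA := slln_event P X hXmeas hiid hdisteq hβ (mu0 j₀) hSapd
    ((β/(1+β)) * Jint p β (mu0 j₀) Sa) hE1
  have hevB := slln_event P X hXmeas hiid hdisteq hβ (mu0 j₀) hSbpd
    ((β/(1+β)) * Jint p β (mu0 j₀) Sb) hE2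
  have hθbC : InThetaC p k c c₁ θb := by
    refine ⟨⟨?_, ?_, ?_⟩, ?_, ?_⟩
    · intro j
      by_cases hj : j = j₀ <;> simp [hθb, hwf, hj]
    · simp only [hθb, hwf]
      rw [Finset.sum_ite_eq' Finset.univ j₀ (fun _ => (1:ℝ))]
      simp
    · intro j; exact hSbpd
    · intro j h i
      have he : h.eigenvalues i = c'' := eigenvalues_smul_one h i
      rw [he]
      exact le_trans (le_max_left _ _) hc''max
    · intro j h i j' h' i'
      have he : h.eigenvalues i = c'' := eigenvalues_smul_one h i
      have he' : h'.eigenvalues i' = c'' := eigenvalues_smul_one h' i'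
      rw [he, he']
      nlinarith
  refine ⟨c', hc'pos, θa, hwf1, hwf0, rfl, rfl, fun j => hSapd, ?_⟩
  filter_upwards [hevA, hevB] with ω hA hB
  obtain ⟨Na, hNa⟩ := hA
  obtain ⟨Nb, hNb⟩ := hB
  refine ⟨max (max Na Nb) 1, fun n hn => ?_⟩
  have hn1 : 1 ≤ n := le_trans (le_max_right _ _) hn
  have hna : Na ≤ n := le_trans (le_trans (le_max_left _ _) (le_max_left _ _)) hn
  have hnb : Nb ≤ n := le_trans (le_trans (le_max_right _ _) (le_max_left _ _)) hn
  have hLa := Lemp_eq hβ j₀ θa hwf1 hwf0 hSapd n hn1 (fun i => X i ω)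
  have hLb := Lemp_eq hβ j₀ θb hwf1 hwf0 hSbpd n hn1 (fun i => X i ω)
  have hnne : (n:ℝ) ≠ 0 := Nat.cast_ne_zero.2 (by omega)
  have havgA := hNa n hna
  have havgB := hNb n hnb
  have hposA : 0 ≤ Lemp p k β θa n (fun i => X i ω) := by
    rw [hLa]
    have heq : (1/β) * ((β/(1+β)) * Jint p β (mu0 j₀) Sa)
        = (1/(1+β)) * Jint p β (mu0 j₀) Sa := by
      field_simp
    have hmul := mul_le_mul_of_nonneg_left havgA (le_of_lt (one_div_pos.2 hβ))
    simp only [hθa] at *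
    linarith [hmul, heq.symm.le, heq.le]
  refine ⟨?_, hposA, ?_⟩
  · rw [hLa]
    simp only [hθa]
    ring
  · intro b hb
    have hbb := hb θb hθbC
    have hposB : 0 ≤ Lemp p k β θb n (fun i => X i ω) := by
      rw [hLb]
      have heq : (1/β) * ((β/(1+β)) * Jint p β (mu0 j₀) Sb)
          = (1/(1+β)) * Jint p β (mu0 j₀) Sb := by
        field_simp
      have hmul := mul_le_mul_of_nonneg_left havgB (le_of_lt (one_div_pos.2 hβ))
      simp only [hθb] at *
      linarith [hmul, heq.symm.le, heq.le]
    linarith
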